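/- arXiv:2210.16876 — 3 statements merged into one kernel-verified Lean document; each statement's English description precedes it below -/
import Mathlib

section
/- Let ~ be an equivalence relation on natural numbers k ≥ 1 (representing exponents in words 0^k 1) such that for all k: k ~ k + gcd(m, 2n), and such that for all k ∈ {1,…,gcd(m,n)}: k ~ k + gcd(m,n), where gcd(m,3n) = 3·gcd(m,n) and gcd(m,2n) = 2·gcd(m,n). Then k ~ k + gcd(m,n) for all k ≥ 1. -/
theorem stmt5 (m n : ℕ) (hm : 1 ≤ m) (hn : 1 ≤ n)
    (r : ℕ → ℕ → Prop) (hr : Equivalence r)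
    (h2 : Nat.gcd m (2 * n) = 2 * Nat.gcd m n)
    (h3 : Nat.gcd m (3 * n) = 3 * Nat.gcd m n)
    (hA : ∀ k, 1 ≤ k → r k (k + Nat.gcd m (2 * n)))
    (hB : ∀ k, 1 ≤ k → k ≤ Nat.gcd m n → r k (k + Nat.gcd m n)) :
    ∀ k, 1 ≤ k → r k (k + Nat.gcd m n) := by
  set d := Nat.gcd m n with hd
  have hd1 : 1 ≤ d := Nat.gcd_pos_of_pos_left _ hm
  have hA' : ∀ k, 1 ≤ k → r k (k + 2 * d) := by
    intro k hk; have := hA k hk; rwa [h2] at this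
  intro k
  induction k using Nat.strong_induction_on with
  | _ k ih =>
    intro hk
    by_cases hkd : k ≤ d
    · exact hB k hk hkd
    · push_neg at hkd
      have hk' : 1 ≤ k - d := by omega
      have h1 : r (k - d) k := by
        have := ih (k - d) (by omega) hk'
        rwa [Nat.sub_add_cancel (by omega)] at this
      have h2' : r (k - d) (k + d) := by
        have := hA' (k - d) hk'
        have e : k - d + 2 * d = k + d := by omega
        rwa [e] at this
      exact hr.trans (hr.symm h1) h2'
end

section
/- Let ~ be an equivalence relation on finite binary words such that (i) uw ~ vw whenever u ~ v and w is any word, (ii) 1^r 0 ~ 10 for all r ≥ 1, (iii) 0^s 1 ~ 01 for all s ≥ 1, and (iv) 01 ~ 10 ~ 010 ~ 011. Then any two finite binary words each containing both digits 0 and 1 are ~-equivalent. -/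
/-- Decomposition: a word containing both digits starts with a run of some digit
followed by the other digit. -/
lemma decomp : ∀ u : List Bool, false ∈ u → true ∈ u →
    ∃ (k : ℕ) (b : Bool) (w : List Bool), 1 ≤ k ∧
      u = List.replicate k b ++ [!b] ++ w := by
  intro u
  induction u with
  | nil => simp
  | cons a t ih =>
    intro hf ht
    rcases t with _ | ⟨c, t'⟩
    · cases a <;> simp_all
    · by_cases hc : c = a
      · subst hc
        have hft : false ∈ c :: t' := by cases c <;> simp_all
        have htt : true ∈ c :: t' := by cases c <;> simp_all
        obtain ⟨k, b, w, hk, heq⟩ := ih hft htt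
        match k, hk with
        | k + 1, _ =>
          rw [List.replicate_succ] at heq
          simp only [List.cons_append] at heq
          injection heq with hb ht'
          subst hb
          refine ⟨k + 2, c, w, by omega, ?_⟩
          simp [List.replicate_succ, ht']
      · refine ⟨1, a, t', le_refl 1, ?_⟩
        have : c = !a := by cases a <;> cases c <;> simp_all
        simp [this]

theorem stmt7 (r : List Bool → List Bool → Prop) (hr : Equivalence r)
    (hsuffix : ∀ u v w, r u v → r (u ++ w) (v ++ w))
    (h1 : ∀ k, 1 ≤ k → r (List.replicate k true ++ [false]) [true, false])
    (h0 : ∀ k, 1 ≤ k → r (List.replicate k false ++ [true]) [false, true])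
    (h4a : r [false, true] [true, false])
    (h4b : r [true, false] [false, true, false])
    (h4c : r [false, true, false] [false, true, true]) :
    ∀ u v, false ∈ u → true ∈ u → false ∈ v → true ∈ v → r u v := by
  obtain ⟨hrefl, hsymm, htrans⟩ := hr
  -- absorb any suffix after [true, false]
  have hA : ∀ w : List Bool, r ([true, false] ++ w) [true, false] := by
    intro w
    induction w using List.reverseRecOn with
    | nil => simpa using hrefl [true, false]
    | append_singleton w b ihw =>
      have step : r ([true, false] ++ (w ++ [b])) ([true, false] ++ [b]) := by
        have := hsuffix _ _ [b] ihw
        simpa [List.append_assoc] using this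
      refine htrans step ?_
      cases b
      · -- [1,0,0] ~ [1,0]
        have h1 : r [false, true, false] [true, false, false] := by
          simpa using hsuffix _ _ [false] h4a
        exact htrans (hsymm h1) (hsymm h4b)
      · -- [1,0,1] ~ [1,0]
        have h1 : r [false, true, true] [true, false, true] := by
          simpa using hsuffix _ _ [true] h4a
        exact htrans (hsymm h1) (htrans (hsymm h4c) (hsymm h4b))
  have hB : ∀ u : List Bool, false ∈ u → true ∈ u → r u [true, false] := by
    intro u hf ht
    obtain ⟨k, b, w, hk, heq⟩ := decomp u hf ht
    subst heq
    cases b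
    · -- 0^k 1 ++ w
      have h01 : r (List.replicate k false ++ [true] ++ w) ([false, true] ++ w) :=
        hsuffix _ _ w (h0 k hk)
      have h10 : r ([false, true] ++ w) ([true, false] ++ w) := hsuffix _ _ w h4a
      exact htrans h01 (htrans h10 (hA w))
    · have h10 : r (List.replicate k true ++ [false] ++ w) ([true, false] ++ w) :=
        hsuffix _ _ w (h1 k hk)
      exact htrans h10 (hA w)
  intro u v hfu htu hfv htv
  exact htrans (hB u hfu htu) (hsymm (hB v hfv htv))
end

section
/- Let y = x₀² x₁ in Thompson's group F. For every n ≥ 1, the element y^n has pairs of branches 0^{2n+1} → 0, 0^{2k}10 → 1^{1+3(n−k)}0 and 0^{2k}11 → 1^{2+3(n−k)}0 and 0^{2k−1}1 → 1^{3(n−k+1)}0 for 1 ≤ k ≤ n, and 1 → 1^{3n+1}. -/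
/-- The generator `x₀` of Thompson's group `F`, extended by the identity outside `[0,1]`. -/
noncomputable def x0fun : ℝ → ℝ := fun t =>
  if t < 0 then t
  else if t ≤ 1/4 then 2 * t
  else if t ≤ 1/2 then t + 1/4
  else if t ≤ 1 then t/2 + 1/2
  else t

/-- The inverse of `x₀`. -/
noncomputable def x0invfun : ℝ → ℝ := fun t =>
  if t < 0 then t
  else if t ≤ 1/2 then t/2
  else if t ≤ 3/4 then t - 1/4
  else if t ≤ 1 then 2 * t - 1
  else t

/-- The generator `x₁` of Thompson's group `F`, extended by the identity outside `[0,1]`. -/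
noncomputable def x1fun : ℝ → ℝ := fun t =>
  if t ≤ 1/2 then t
  else if t ≤ 5/8 then 2 * t - 1/2
  else if t ≤ 3/4 then t + 1/8
  else if t ≤ 1 then t/2 + 1/2
  else t

/-- The inverse of `x₁`. -/
noncomputable def x1invfun : ℝ → ℝ := fun t =>
  if t ≤ 1/2 then t
  else if t ≤ 3/4 then (t + 1/2)/2
  else if t ≤ 7/8 then t - 1/8
  else if t ≤ 1 then 2 * t - 1
  else t

/-- `f` maps the interval `I` linearly (affinely, with positive slope) onto `J`. -/
def MapsLinearlyOnto (f : ℝ → ℝ) (I J : Set ℝ) : Prop :=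
  (∃ a b : ℝ, 0 < a ∧ ∀ t ∈ I, f t = a * t + b) ∧ f '' I = J

/-- The dyadic rational `0.u` determined by the finite binary word `u`. -/
noncomputable def wordVal : List Bool → ℝ
  | [] => 0
  | b :: u => ((if b then 1 else 0) + wordVal u) / 2

/-- The dyadic interval `[u] = [0.u, 0.u + 2^{-|u|}]` of the finite binary word `u`. -/
noncomputable def dyadicInterval (u : List Bool) : Set ℝ :=
  Set.Icc (wordVal u) (wordVal u + 2 ^ (-(u.length : ℤ)))

/-- The element `y = x₀² x₁` (composition from left to right). -/
noncomputable def yfun : ℝ → ℝ := fun t => x1fun (x0fun (x0fun t))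

lemma x0a {s : ℝ} (h1 : 0 ≤ s) (h2 : s ≤ 1/4) : x0fun s = 2*s := by
  simp only [x0fun]; split_ifs <;> linarith
lemma x0b {s : ℝ} (h1 : 1/4 ≤ s) (h2 : s ≤ 1/2) : x0fun s = s + 1/4 := by
  simp only [x0fun]; split_ifs <;> linarith
lemma x0c {s : ℝ} (h1 : 1/2 ≤ s) (h2 : s ≤ 1) : x0fun s = s/2 + 1/2 := by
  simp only [x0fun]; split_ifs <;> linarith
lemma x1a {s : ℝ} (h2 : s ≤ 1/2) : x1fun s = s := by
  simp only [x1fun]; split_ifs <;> linarith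
lemma x1b {s : ℝ} (h1 : 1/2 ≤ s) (h2 : s ≤ 5/8) : x1fun s = 2*s - 1/2 := by
  simp only [x1fun]; split_ifs <;> linarith
lemma x1c {s : ℝ} (h1 : 5/8 ≤ s) (h2 : s ≤ 3/4) : x1fun s = s + 1/8 := by
  simp only [x1fun]; split_ifs <;> linarith
lemma x1d {s : ℝ} (h1 : 3/4 ≤ s) (h2 : s ≤ 1) : x1fun s = s/2 + 1/2 := by
  simp only [x1fun]; split_ifs <;> linarith

lemma yA {s : ℝ} (h1 : 0 ≤ s) (h2 : s ≤ 3/16) : yfun s = 4 * s := by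
  rcases le_or_gt s (1/8) with h | h
  · simp only [yfun]
    rw [x0a (s := s) h1 (by linarith), x0a (s := 2*s) (by linarith) (by linarith),
      x1a (by linarith)]
    ring
  · simp only [yfun]
    rw [x0a (s := s) h1 (by linarith), x0b (s := 2*s) (by linarith) (by linarith),
      x1b (by linarith) (by linarith)]
    ring
lemma yB {s : ℝ} (h1 : 3/16 ≤ s) (h2 : s ≤ 1/4) : yfun s = 2 * s + 3/8 := by
  simp only [yfun]
  rw [x0a (s := s) (by linarith) (by linarith), x0b (s := 2*s) (by linarith) (by linarith),
    x1c (by linarith) (by linarith)]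
  ring
lemma yC {s : ℝ} (h1 : 1/4 ≤ s) (h2 : s ≤ 1/2) : yfun s = s/4 + 13/16 := by
  simp only [yfun]
  rw [x0b (s := s) h1 h2, x0c (s := s + 1/4) (by linarith) (by linarith),
    x1d (by linarith) (by linarith)]
  ring
lemma yD {s : ℝ} (h1 : 1/2 ≤ s) (h2 : s ≤ 1) : yfun s = s/8 + 7/8 := by
  simp only [yfun]
  rw [x0c (s := s) h1 h2, x0c (s := s/2 + 1/2) (by linarith) (by linarith),
    x1d (by linarith) (by linarith)]
  ring
-- word value lemmas
lemma wv_nil : wordVal [] = 0 := rfl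

lemma wv_rep_false (m : ℕ) (w : List Bool) :
    wordVal (List.replicate m false ++ w) = (1/2)^m * wordVal w := by
  induction m with
  | zero => simp
  | succ m ih =>
    rw [List.replicate_succ, List.cons_append]
    show ((if false then (1:ℝ) else 0) + wordVal (List.replicate m false ++ w)) / 2 = _
    rw [ih, pow_succ]; norm_num; ring

lemma wv_rep_true (m : ℕ) (w : List Bool) :
    wordVal (List.replicate m true ++ w) = 1 - (1/2)^m + (1/2)^m * wordVal w := by
  induction m with
  | zero => simp
  | succ m ih =>
    rw [List.replicate_succ, List.cons_append]
    show ((if true then (1:ℝ) else 0) + wordVal (List.replicate m true ++ w)) / 2 = _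
    rw [ih, pow_succ]; norm_num; ring

lemma zpw (m : ℕ) : (2:ℝ)^(-(m:ℤ)) = (1/2)^m := by
  rw [zpow_neg, zpow_natCast, one_div, inv_pow]

lemma dI_rep_false (m : ℕ) :
    dyadicInterval (List.replicate m false) = Set.Icc 0 ((1/2)^m) := by
  have := wv_rep_false m []
  rw [List.append_nil] at this
  rw [dyadicInterval, this, wv_nil, List.length_replicate, zpw]
  norm_num

lemma dI_f10 (m : ℕ) :
    dyadicInterval (List.replicate m false ++ [true, false]) =
      Set.Icc ((1/2)^m * (1/2)) ((1/2)^m * (3/4)) := by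
  rw [dyadicInterval, wv_rep_false]
  have h1 : wordVal [true, false] = 1/2 := by norm_num [wordVal]
  have h2 : (List.replicate m false ++ [true, false]).length = m + 2 := by simp
  rw [h1, h2, zpw, pow_add]
  norm_num
  congr 1
  ring

lemma dI_f11 (m : ℕ) :
    dyadicInterval (List.replicate m false ++ [true, true]) =
      Set.Icc ((1/2)^m * (3/4)) ((1/2)^m) := by
  rw [dyadicInterval, wv_rep_false]
  have h1 : wordVal [true, true] = 3/4 := by norm_num [wordVal]
  have h2 : (List.replicate m false ++ [true, true]).length = m + 2 := by simp
  rw [h1, h2, zpw, pow_add]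
  norm_num
  congr 1
  ring

lemma dI_f1 (m : ℕ) :
    dyadicInterval (List.replicate m false ++ [true]) =
      Set.Icc ((1/2)^m * (1/2)) ((1/2)^m) := by
  rw [dyadicInterval, wv_rep_false]
  have h1 : wordVal [true] = 1/2 := by norm_num [wordVal]
  have h2 : (List.replicate m false ++ [true]).length = m + 1 := by simp
  rw [h1, h2, zpw, pow_add]
  norm_num
  congr 1
  ring

lemma dI_t0 (m : ℕ) :
    dyadicInterval (List.replicate m true ++ [false]) =
      Set.Icc (1 - (1/2)^m) (1 - (1/2)^m * (1/2)) := by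
  rw [dyadicInterval, wv_rep_true]
  have h1 : wordVal [false] = 0 := by norm_num [wordVal]
  have h2 : (List.replicate m true ++ [false]).length = m + 1 := by simp
  rw [h1, h2, zpw, pow_add]
  norm_num
  congr 1
  ring

lemma dI_t (m : ℕ) :
    dyadicInterval (List.replicate m true) = Set.Icc (1 - (1/2)^m) 1 := by
  have := wv_rep_true m []
  rw [List.append_nil] at this
  rw [dyadicInterval, this, wv_nil, List.length_replicate, zpw]
  norm_num

lemma dI_false : dyadicInterval [false] = Set.Icc 0 (1/2) := by
  rw [dyadicInterval]
  norm_num [wordVal]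

lemma dI_true : dyadicInterval [true] = Set.Icc (1/2) 1 := by
  rw [dyadicInterval]
  norm_num [wordVal]

-- the generic linear-onto lemma
lemma mapsLin {f : ℝ → ℝ} (a b p q p' q' : ℝ) (ha : 0 < a) (hpq : p ≤ q)
    (h : ∀ t ∈ Set.Icc p q, f t = a * t + b)
    (hp : a * p + b = p') (hq : a * q + b = q') :
    MapsLinearlyOnto f (Set.Icc p q) (Set.Icc p' q') := by
  constructor
  · exact ⟨a, b, ha, h⟩
  · rw [Set.image_congr h]
    rw [show (fun t => a * t + b) = (a * · + b) from rfl]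
    rw [Set.image_affine_Icc' ha, hp, hq]

lemma I1 (j : ℕ) : (4:ℝ)^j * (1/2)^(2*j) = 1 := by
  rw [pow_mul, ← mul_pow]; norm_num

lemma I2 (e : ℕ) : ((1/2):ℝ)^(3*e) = (1/8)^e := by
  rw [pow_mul]; norm_num

-- the iterate formulas
lemma L1 (n : ℕ) : ∀ t ∈ Set.Icc (0:ℝ) ((1/2)^(2*n+1)), yfun^[n] t = 4^n * t := by
  induction n with
  | zero => intro t _; simp
  | succ n ih =>
    intro t ht
    obtain ⟨h0, h1⟩ := ht
    have hBpos : (0:ℝ) < (1/2)^(2*n) := by positivity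
    have hApos : (0:ℝ) < 4^n := by positivity
    have hA := I1 n
    have hB : ((1/2):ℝ)^(2*(n+1)+1) = (1/2)^(2*n) * (1/8) := by
      rw [show 2*(n+1)+1 = 2*n+3 from by ring, pow_add]; norm_num
    have hB2 : ((1/2):ℝ)^(2*n+1) = (1/2)^(2*n) * (1/2) := by
      rw [pow_add]; norm_num
    rw [hB] at h1
    have hy : yfun^[n] t = 4^n * t := ih t ⟨h0, by rw [hB2]; nlinarith⟩
    rw [Function.iterate_succ_apply', hy]
    have hs2 : (4:ℝ)^n * t ≤ 1/8 := by
      nlinarith [mul_le_mul_of_nonneg_left h1 hApos.le]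
    rw [yA (by positivity) (by linarith)]
    rw [pow_succ]; ring

lemma L2 (n : ℕ) : ∀ t ∈ Set.Icc (1/2:ℝ) 1, yfun^[n] t = (1/8)^n * (t - 1) + 1 := by
  induction n with
  | zero => intro t _; simp
  | succ n ih =>
    intro t ht
    obtain ⟨h0, h1⟩ := ht
    have hCpos : (0:ℝ) < (1/8)^n := by positivity
    have hC1 : ((1/8):ℝ)^n ≤ 1 := pow_le_one₀ (by norm_num) (by norm_num)
    rw [Function.iterate_succ_apply', ih t ⟨h0, h1⟩]
    rw [yD (by nlinarith) (by nlinarith)]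
    rw [pow_succ]; ring

lemma claim1 (n : ℕ) :
    MapsLinearlyOnto (yfun^[n]) (dyadicInterval (List.replicate (2 * n + 1) false))
      (dyadicInterval [false]) := by
  rw [dI_rep_false, dI_false]
  have hA := I1 n
  have hB2 : ((1/2):ℝ)^(2*n+1) = (1/2)^(2*n) * (1/2) := by rw [pow_add]; norm_num
  refine mapsLin (4^n) 0 _ _ _ _ (by positivity) (by positivity)
    (fun t ht => by rw [L1 n t ht]; ring) (by ring) ?_
  rw [hB2]; linear_combination (1/2 : ℝ) * hA

lemma claim2 (n k : ℕ) (hk1 : 1 ≤ k) (hkn : k ≤ n) :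
    MapsLinearlyOnto (yfun^[n])
      (dyadicInterval (List.replicate (2 * k) false ++ [true, false]))
      (dyadicInterval (List.replicate (1 + 3 * (n - k)) true ++ [false])) := by
  obtain ⟨j, rfl⟩ : ∃ j, k = j + 1 := ⟨k - 1, by omega⟩
  set e := n - (j + 1) with he
  have hne : n = e + (1 + j) := by omega
  rw [dI_f10, dI_t0]
  have hA := I1 j
  have hApos : (0:ℝ) < 4^j := by positivity
  have hBpos : (0:ℝ) < (1/2)^(2*j) := by positivity
  have hCpos : (0:ℝ) < (1/8)^e := by positivity
  have hB : ((1/2):ℝ)^(2*(j+1)) = (1/2)^(2*j) * (1/4) := by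
    rw [show 2*(j+1) = 2*j+2 from by ring, pow_add]; norm_num
  have hC : ((1/2):ℝ)^(1+3*e) = (1/8)^e * (1/2) := by
    rw [pow_add, I2]; norm_num; ring
  have hB2 : ((1/2):ℝ)^(2*j+1) = (1/2)^(2*j) * (1/2) := by rw [pow_add]; norm_num
  refine mapsLin ((1/8)^e * 4^(j+1)) (1 - (1/8)^e) _ _ _ _ (by positivity)
    (by nlinarith) ?_ ?_ ?_
  · intro t ⟨ht1, ht2⟩
    rw [hB] at ht1 ht2
    have ht0 : 0 ≤ t := by nlinarith
    rw [hne, Function.iterate_add_apply, Function.iterate_add_apply,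
      Function.iterate_one]
    rw [L1 j t ⟨ht0, by rw [hB2]; nlinarith⟩]
    rw [yA (by positivity) (by nlinarith [mul_le_mul_of_nonneg_left ht2 hApos.le])]
    rw [L2 e _ ⟨by nlinarith [mul_le_mul_of_nonneg_left ht1 hApos.le],
      by nlinarith [mul_le_mul_of_nonneg_left ht2 hApos.le]⟩]
    rw [pow_succ]; ring
  · rw [hB, hC, pow_succ]; linear_combination ((1/8:ℝ)^e * (1/2)) * hA
  · rw [hB, hC, pow_succ]; linear_combination ((1/8:ℝ)^e * (3/4)) * hA

lemma claim3 (n k : ℕ) (hk1 : 1 ≤ k) (hkn : k ≤ n) :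
    MapsLinearlyOnto (yfun^[n])
      (dyadicInterval (List.replicate (2 * k) false ++ [true, true]))
      (dyadicInterval (List.replicate (2 + 3 * (n - k)) true ++ [false])) := by
  obtain ⟨j, rfl⟩ : ∃ j, k = j + 1 := ⟨k - 1, by omega⟩
  set e := n - (j + 1) with he
  have hne : n = e + (1 + j) := by omega
  rw [dI_f11, dI_t0]
  have hA := I1 j
  have hApos : (0:ℝ) < 4^j := by positivity
  have hBpos : (0:ℝ) < (1/2)^(2*j) := by positivity
  have hCpos : (0:ℝ) < (1/8)^e := by positivity
  have hB : ((1/2):ℝ)^(2*(j+1)) = (1/2)^(2*j) * (1/4) := by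
    rw [show 2*(j+1) = 2*j+2 from by ring, pow_add]; norm_num
  have hC : ((1/2):ℝ)^(2+3*e) = (1/8)^e * (1/4) := by
    rw [pow_add, I2]; norm_num; ring
  have hB2 : ((1/2):ℝ)^(2*j+1) = (1/2)^(2*j) * (1/2) := by rw [pow_add]; norm_num
  refine mapsLin ((1/8)^e * (2 * 4^j)) (1 - (5/8) * (1/8)^e) _ _ _ _ (by positivity)
    (by nlinarith) ?_ ?_ ?_
  · intro t ⟨ht1, ht2⟩
    rw [hB] at ht1 ht2
    have ht0 : 0 ≤ t := by nlinarith
    rw [hne, Function.iterate_add_apply, Function.iterate_add_apply,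
      Function.iterate_one]
    rw [L1 j t ⟨ht0, by rw [hB2]; nlinarith⟩]
    rw [yB (by nlinarith [mul_le_mul_of_nonneg_left ht1 hApos.le])
      (by nlinarith [mul_le_mul_of_nonneg_left ht2 hApos.le])]
    rw [L2 e _ ⟨by nlinarith [mul_le_mul_of_nonneg_left ht1 hApos.le],
      by nlinarith [mul_le_mul_of_nonneg_left ht2 hApos.le]⟩]
    ring
  · rw [hB, hC]; linear_combination ((1/8:ℝ)^e * (3/8)) * hA
  · rw [hB, hC]; linear_combination ((1/8:ℝ)^e * (1/2)) * hA

lemma claim4 (n k : ℕ) (hk1 : 1 ≤ k) (hkn : k ≤ n) :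
    MapsLinearlyOnto (yfun^[n])
      (dyadicInterval (List.replicate (2 * k - 1) false ++ [true]))
      (dyadicInterval (List.replicate (3 * (n - k + 1)) true ++ [false])) := by
  obtain ⟨j, rfl⟩ : ∃ j, k = j + 1 := ⟨k - 1, by omega⟩
  set e := n - (j + 1) with he
  have hne : n = e + (1 + j) := by omega
  rw [show 2*(j+1) - 1 = 2*j+1 from by omega, show n - (j+1) + 1 = e + 1 from by omega]
  rw [dI_f1, dI_t0]
  have hA := I1 j
  have hApos : (0:ℝ) < 4^j := by positivity
  have hBpos : (0:ℝ) < (1/2)^(2*j) := by positivity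
  have hCpos : (0:ℝ) < (1/8)^e := by positivity
  have hC : ((1/2):ℝ)^(3*(e+1)) = (1/8)^e * (1/8) := by
    rw [show 3*(e+1) = 3*e+3 from by ring, pow_add, I2]; norm_num
  have hB2 : ((1/2):ℝ)^(2*j+1) = (1/2)^(2*j) * (1/2) := by rw [pow_add]; norm_num
  refine mapsLin ((1/8)^e * (4^j / 4)) (1 - (3/16) * (1/8)^e) _ _ _ _ (by positivity)
    (by nlinarith) ?_ ?_ ?_
  · intro t ⟨ht1, ht2⟩
    rw [hB2] at ht1 ht2
    have ht0 : 0 ≤ t := by nlinarith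
    rw [hne, Function.iterate_add_apply, Function.iterate_add_apply,
      Function.iterate_one]
    rw [L1 j t ⟨ht0, by rw [hB2]; nlinarith⟩]
    rw [yC (by nlinarith [mul_le_mul_of_nonneg_left ht1 hApos.le])
      (by nlinarith [mul_le_mul_of_nonneg_left ht2 hApos.le])]
    rw [L2 e _ ⟨by nlinarith [mul_le_mul_of_nonneg_left ht1 hApos.le],
      by nlinarith [mul_le_mul_of_nonneg_left ht2 hApos.le]⟩]
    ring
  · rw [hB2, hC]; linear_combination ((1/8:ℝ)^e * (1/16)) * hA
  · rw [hB2, hC]; linear_combination ((1/8:ℝ)^e * (1/8)) * hA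

lemma claim5 (n : ℕ) :
    MapsLinearlyOnto (yfun^[n]) (dyadicInterval [true])
      (dyadicInterval (List.replicate (3 * n + 1) true)) := by
  rw [dI_true, dI_t]
  have hC : ((1/2):ℝ)^(3*n+1) = (1/8)^n * (1/2) := by
    rw [pow_add, I2]; norm_num
  refine mapsLin ((1/8)^n) (1 - (1/8)^n) _ _ _ _ (by positivity) (by norm_num)
    (fun t ht => by rw [L2 n t ht]; ring) ?_ ?_
  · rw [hC]; ring
  · ring

theorem stmt9 (n : ℕ) (hn : 1 ≤ n) :
    MapsLinearlyOnto (yfun^[n]) (dyadicInterval (List.replicate (2 * n + 1) false))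
      (dyadicInterval [false]) ∧
    (∀ k, 1 ≤ k → k ≤ n →
      MapsLinearlyOnto (yfun^[n])
        (dyadicInterval (List.replicate (2 * k) false ++ [true, false]))
        (dyadicInterval (List.replicate (1 + 3 * (n - k)) true ++ [false]))) ∧
    (∀ k, 1 ≤ k → k ≤ n →
      MapsLinearlyOnto (yfun^[n])
        (dyadicInterval (List.replicate (2 * k) false ++ [true, true]))
        (dyadicInterval (List.replicate (2 + 3 * (n - k)) true ++ [false]))) ∧
    (∀ k, 1 ≤ k → k ≤ n →
      MapsLinearlyOnto (yfun^[n])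
        (dyadicInterval (List.replicate (2 * k - 1) false ++ [true]))
        (dyadicInterval (List.replicate (3 * (n - k + 1)) true ++ [false]))) ∧
    MapsLinearlyOnto (yfun^[n]) (dyadicInterval [true])
      (dyadicInterval (List.replicate (3 * n + 1) true)) := by
  exact ⟨claim1 n, fun k h1 h2 => claim2 n k h1 h2, fun k h1 h2 => claim3 n k h1 h2,
    fun k h1 h2 => claim4 n k h1 h2, claim5 n⟩
end
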